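/- arXiv:1002.3866 — 3 statements merged into one kernel-verified Lean document; each statement's English description precedes it below -/
import Mathlib

section
/- The map φ defined on strict pin words by replacing the first two letters u₁u₂ (a numeral followed by a direction) according to the table 1R↦RUR, 2R↦LUR, 3R↦LDR, 4R↦RDR, 1L↦RUL, 2L↦LUL, 3L↦LDL, 4L↦RDL, 1U↦URU, 2U↦ULU, 3U↦DLU, 4U↦DRU, 1D↦URD, 2D↦ULD, 3D↦DLD, 4D↦DRD, and leaving the remaining letters unchanged, is a bijection from the set of strict pin words of length n (for any n ≥ 2) onto the set M_{n+1} of words of length n+1 over {L,R,U,D} in which every letter from {L,R} is followed by a letter from {U,D} and vice versa. -/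
namespace PinWords

inductive Letter | N1 | N2 | N3 | N4 | U | D | L | R
  deriving DecidableEq

open Letter

def isNumeral : Letter → Prop
  | N1 | N2 | N3 | N4 => True
  | _ => False

def isDir : Letter → Prop
  | U | D | L | R => True
  | _ => False

def isVert : Letter → Prop
  | U | D => True
  | _ => False

def isHoriz : Letter → Prop
  | L | R => True
  | _ => False

/-- Consecutive letters alternate between the horizontal class {L,R}
and the vertical class {U,D}. -/
def Alternating : List Letter → Prop
  | a :: b :: rest => ((isHoriz a ∧ isVert b) ∨ (isVert a ∧ isHoriz b)) ∧ Alternating (b :: rest)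
  | _ => True

/-- A strict pin word: a numeral followed by a nonempty alternating sequence of directions. -/
def StrictPinWord : List Letter → Prop
  | c :: rest => isNumeral c ∧ rest ≠ [] ∧ (∀ x ∈ rest, isDir x) ∧ Alternating rest
  | [] => False

/-- A quasi-strict pin word: two numerals followed by alternating directions. -/
def QuasiStrictPinWord : List Letter → Prop
  | c :: d :: rest => isNumeral c ∧ isNumeral d ∧ (∀ x ∈ rest, isDir x) ∧ Alternating rest
  | _ => False

/-- The set M : alternating direction words of length at least 3. -/
def InM (w : List Letter) : Prop :=
  3 ≤ w.length ∧ (∀ c ∈ w, isDir c) ∧ Alternating w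

/-- The table defining φ on the first two letters. -/
def varphi : Letter → Letter → List Letter
  | N1, R => [R, U, R] | N2, R => [L, U, R] | N3, R => [L, D, R] | N4, R => [R, D, R]
  | N1, L => [R, U, L] | N2, L => [L, U, L] | N3, L => [L, D, L] | N4, L => [R, D, L]
  | N1, U => [U, R, U] | N2, U => [U, L, U] | N3, U => [D, L, U] | N4, U => [D, R, U]
  | N1, D => [U, R, D] | N2, D => [U, L, D] | N3, D => [D, L, D] | N4, D => [D, R, D]
  | a, b => [a, b]

/-- The map φ : replace the first two letters according to the table, keep the rest. -/
def phi : List Letter → List Letter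
  | a :: b :: rest => varphi a b ++ rest
  | w => w

/-- φ⁻¹ on two-letter direction words, giving a numeral. -/
def phiInv2 : Letter → Letter → Letter
  | R, U => N1 | U, R => N1
  | L, U => N2 | U, L => N2
  | L, D => N3 | D, L => N3
  | R, D => N4 | D, R => N4
  | _, _ => N1

/-- The quadrant function q on pairs of consecutive letters of a pin word. -/
def qfun (a b : Letter) : Letter :=
  match a with
  | N1 | N2 | N3 | N4 =>
    match varphi a b with
    | [_, x, y] => phiInv2 x y
    | _ => N1
  | _ => phiInv2 a b

/-- A strong numeral-led factor: a numeral followed by directions. -/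
def IsSNLF : List Letter → Prop
  | c :: rest => isNumeral c ∧ ∀ x ∈ rest, isDir x
  | [] => False

/-- The order ≼ on pin words of Brignall, Ruškuc and Vatter, via strong
numeral-led factor decompositions.  Each element of `t` is a triple
`(uᵢ, vᵢ, wᵢ)`. -/
def PinOrder (u w : List Letter) : Prop :=
  ∃ (t : List (List Letter × List Letter × List Letter)) (vfin : List Letter),
    u = (t.map fun x => x.1).flatten ∧
    w = (t.map fun x => x.2.1 ++ x.2.2).flatten ++ vfin ∧
    ∀ x ∈ t, IsSNLF x.1 ∧
      ((∃ c rest, x.2.2 = c :: rest ∧ isNumeral c ∧ x.2.2 = x.1) ∨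
       (∃ c rest l uc, x.2.2 = c :: rest ∧ isDir c ∧ x.2.1.getLast? = some l ∧
          x.1 = uc :: rest ∧ qfun l c = uc))

/-! ### Pin sequences in the plane -/

abbrev Pt := ℤ × ℤ

def SepVert (c : Pt) (P Q : Set Pt) : Prop :=
  ((∀ a ∈ P, a.1 < c.1) ∧ (∀ b ∈ Q, c.1 < b.1)) ∨
  ((∀ a ∈ P, c.1 < a.1) ∧ (∀ b ∈ Q, b.1 < c.1))

def SepHoriz (c : Pt) (P Q : Set Pt) : Prop :=
  ((∀ a ∈ P, a.2 < c.2) ∧ (∀ b ∈ Q, c.2 < b.2)) ∨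
  ((∀ a ∈ P, c.2 < a.2) ∧ (∀ b ∈ Q, b.2 < c.2))

/-- A horizontal or vertical line through `c` separates `P` from `Q`. -/
def Separates (c : Pt) (P Q : Set Pt) : Prop := SepVert c P Q ∨ SepHoriz c P Q

/-- `c` does not separate `S` into two nonempty parts. -/
def Independent (c : Pt) (S : Set Pt) : Prop :=
  ¬((∃ a ∈ S, a.1 < c.1) ∧ (∃ a ∈ S, c.1 < a.1)) ∧
  ¬((∃ a ∈ S, a.2 < c.2) ∧ (∃ a ∈ S, c.2 < a.2))

/-- `c` lies in the bounding box of `S`. -/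
def InBox (S : Set Pt) (c : Pt) : Prop :=
  (∃ a ∈ S, a.1 ≤ c.1) ∧ (∃ a ∈ S, c.1 ≤ a.1) ∧ (∃ a ∈ S, a.2 ≤ c.2) ∧ (∃ a ∈ S, c.2 ≤ a.2)

def DistinctCoords {n : ℕ} (p : Fin n → Pt) : Prop :=
  ∀ i j, i ≠ j → (p i).1 ≠ (p j).1 ∧ (p i).2 ≠ (p j).2

/-- The set of points `p j` for `j < i`. -/
def prevSet {n : ℕ} (p : Fin n → Pt) (i : ℕ) : Set Pt := {x | ∃ j : Fin n, j.val < i ∧ x = p j}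

/-- A pin sequence (0-indexed): each pin lies outside the bounding box of the
previous ones and either separates the previous pin from the earlier ones, or
is independent. -/
def IsPinSeq {n : ℕ} (p : Fin n → Pt) : Prop :=
  DistinctCoords p ∧
  ∀ i : Fin n, 1 ≤ i.val →
    ¬ InBox (prevSet p i.val) (p i) ∧
    (Separates (p i) {x | ∃ j : Fin n, j.val + 1 = i.val ∧ x = p j} (prevSet p (i.val - 1)) ∨
     Independent (p i) (prevSet p i.val))

/-- A proper pin sequence: from the third pin on, each pin separates the
previous pin from the earlier ones. -/
def IsProperPinSeq {n : ℕ} (p : Fin n → Pt) : Prop :=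
  IsPinSeq p ∧
  ∀ i : Fin n, 2 ≤ i.val →
    Separates (p i) {x | ∃ j : Fin n, j.val + 1 = i.val ∧ x = p j} (prevSet p (i.val - 1))

/-- The sequence of points `p` is order isomorphic to the diagram of `σ`. -/
def RepresentsPerm {k m : ℕ} (p : Fin k → Pt) (σ : Equiv.Perm (Fin m)) : Prop :=
  ∃ e : Fin k ≃ Fin m, ∀ i j : Fin k,
    ((p i).1 < (p j).1 ↔ e i < e j) ∧ ((p i).2 < (p j).2 ↔ σ (e i) < σ (e j))

def IsIntervalSet {n : ℕ} (S : Set (Fin n)) : Prop :=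
  ∀ a ∈ S, ∀ b ∈ S, ∀ c, a ≤ c → c ≤ b → c ∈ S

/-- A simple permutation: no nontrivial block. -/
def IsSimplePerm {n : ℕ} (σ : Equiv.Perm (Fin n)) : Prop :=
  ∀ S : Set (Fin n), IsIntervalSet S → IsIntervalSet (σ '' S) → S.ncard ≤ 1 ∨ S = Set.univ

/-- Pattern containment of permutations. -/
def IsPattern {k n : ℕ} (π : Equiv.Perm (Fin k)) (σ : Equiv.Perm (Fin n)) : Prop :=
  ∃ f : Fin k → Fin n, StrictMono f ∧ ∀ i j : Fin k, π i < π j ↔ σ (f i) < σ (f j)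

/-- The meaning of a letter of a pin word: `prev` is the set of all earlier
points (including the origin), `prevPin` is the previous pin, `older` is
`prev` minus the previous pin. -/
def LetterEncodes (c : Letter) (pt : Pt) (prev prevPin older : Set Pt) : Prop :=
  match c with
  | U => (∀ a ∈ prev, a.2 < pt.2) ∧ SepVert pt prevPin older
  | D => (∀ a ∈ prev, pt.2 < a.2) ∧ SepVert pt prevPin older
  | L => (∀ a ∈ prev, pt.1 < a.1) ∧ SepHoriz pt prevPin older
  | R => (∀ a ∈ prev, a.1 < pt.1) ∧ SepHoriz pt prevPin older
  | N1 => Independent pt prev ∧ ∀ a ∈ prev, a.1 < pt.1 ∧ a.2 < pt.2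
  | N2 => Independent pt prev ∧ ∀ a ∈ prev, pt.1 < a.1 ∧ a.2 < pt.2
  | N3 => Independent pt prev ∧ ∀ a ∈ prev, pt.1 < a.1 ∧ pt.2 < a.2
  | N4 => Independent pt prev ∧ ∀ a ∈ prev, a.1 < pt.1 ∧ pt.2 < a.2

/-- The word `w` encodes the extended pin sequence `p₀, p₁, …, p_n`
(the origin is `p 0`). -/
def Encodes (w : List Letter) (p : Fin (w.length + 1) → Pt) : Prop :=
  DistinctCoords p ∧
  ∀ k : Fin w.length,
    LetterEncodes (w.get k) (p k.succ)
      (prevSet p (k.val + 1))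
      {x | ∃ j : Fin (w.length + 1), j.val = k.val ∧ x = p j}
      (prevSet p k.val)

/-- The pin word `w` corresponds to the permutation `σ`. -/
def WordRepresents (w : List Letter) {m : ℕ} (σ : Equiv.Perm (Fin m)) : Prop :=
  ∃ p : Fin (w.length + 1) → Pt, Encodes w p ∧
    RepresentsPerm (fun i : Fin w.length => p i.succ) σ

/-- A proper pin-permutation: one admitting a proper pin representation. -/
def ProperPinPerm {n : ℕ} (σ : Equiv.Perm (Fin n)) : Prop :=
  ∃ p : Fin n → Pt, IsProperPinSeq p ∧ RepresentsPerm p σ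

/-- `pt` lies in the quadrant named by the numeral `c` of the bounding box of `S`. -/
def InQuadrant (c : Letter) (pt : Pt) (S : Set Pt) : Prop :=
  match c with
  | N1 => ∀ a ∈ S, a.1 < pt.1 ∧ a.2 < pt.2
  | N2 => ∀ a ∈ S, pt.1 < a.1 ∧ a.2 < pt.2
  | N3 => ∀ a ∈ S, pt.1 < a.1 ∧ pt.2 < a.2
  | N4 => ∀ a ∈ S, a.1 < pt.1 ∧ pt.2 < a.2
  | _ => False

/-- Two points are in knight position. -/
def Knight (a b : Pt) : Prop :=
  (|a.1 - b.1| = 1 ∧ |a.2 - b.2| = 2) ∨ (|a.1 - b.1| = 2 ∧ |a.2 - b.2| = 1)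

/-- The set E(π) of forbidden factors associated to a simple permutation π. -/
def Epi {m : ℕ} (π : Equiv.Perm (Fin m)) : Set (List Letter) :=
  {v | ∃ u, StrictPinWord u ∧ WordRepresents u π ∧ v = phi u} ∪
  {v | ∃ u x, QuasiStrictPinWord u ∧ WordRepresents u π ∧
      x.length = 2 ∧ (∀ c ∈ x, isDir c) ∧ v = x ++ phi u.tail ∧ Alternating v}

/-!
For a fixed direction `b`, the column `a ↦ varphi a b` of the table sends the four numerals
bijectively onto the four words `x y b` with `x ⟂ y ⟂ b`, and `phiInv2 x y` reads the numeral
back. Since `phi` rewrites only the first two letters, the rest is bookkeeping of the tail.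
-/

def Perp (a b : Letter) : Prop := (isHoriz a ∧ isVert b) ∨ (isVert a ∧ isHoriz b)

theorem Perp.isDir_left {a b : Letter} (h : Perp a b) : isDir a := by
  cases a <;> simp_all [Perp, isHoriz, isVert, isDir]

theorem Perp.isDir_right {a b : Letter} (h : Perp a b) : isDir b := by
  cases b <;> simp_all [Perp, isHoriz, isVert, isDir]

theorem phi_cons_cons (a b : Letter) (rest : List Letter) :
    phi (a :: b :: rest) = varphi a b ++ rest :=
  rfl

theorem strictPinWord_cons_cons_iff {a b : Letter} {rest : List Letter} :
    StrictPinWord (a :: b :: rest) ↔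
      isNumeral a ∧ isDir b ∧ (∀ c ∈ rest, isDir c) ∧ Alternating (b :: rest) := by
  simp [StrictPinWord, and_assoc]

theorem inM_cons_cons_cons_iff {x y z : Letter} {rest : List Letter} :
    InM (x :: y :: z :: rest) ↔
      Perp x y ∧ Perp y z ∧ (∀ c ∈ rest, isDir c) ∧ Alternating (z :: rest) := by
  constructor
  · rintro ⟨-, hdir, hxy, hyz, halt⟩
    exact ⟨hxy, hyz, fun c hc => hdir c (by simp [hc]), halt⟩
  · rintro ⟨hxy, hyz, hdir, halt⟩
    refine ⟨by simp, ?_, hxy, hyz, halt⟩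
    simp only [List.mem_cons, forall_eq_or_imp]
    exact ⟨hxy.isDir_left, hxy.isDir_right, hyz.isDir_right, hdir⟩

theorem StrictPinWord.exists_eq_cons_cons {w : List Letter} (h : StrictPinWord w) :
    ∃ a b rest, w = a :: b :: rest := by
  match w, h with
  | a :: b :: rest, _ => exact ⟨a, b, rest, rfl⟩
  | [_], h => exact absurd rfl h.2.1

theorem InM.exists_eq_cons_cons_cons {w : List Letter} (h : InM w) :
    ∃ x y z rest, w = x :: y :: z :: rest := by
  match w, h.1 with
  | x :: y :: z :: rest, _ => exact ⟨x, y, z, rest, rfl⟩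

theorem varphi_eq_of_isNumeral {a b : Letter} (ha : isNumeral a) (hb : isDir b) :
    ∃ x y, varphi a b = [x, y, b] ∧ Perp x y ∧ Perp y b := by
  cases a <;> cases b <;> simp_all [isNumeral, isDir, varphi, Perp, isHoriz, isVert]

theorem varphi_left_injOn (b : Letter) :
    Set.InjOn (varphi · b) {a | isNumeral a} := by
  intro a ha a' ha' h
  cases a <;> cases a' <;> cases b <;> simp_all [isNumeral, varphi]

theorem varphi_phiInv2 {x y z : Letter} (hxy : Perp x y) (hyz : Perp y z) :
    isNumeral (phiInv2 x y) ∧ varphi (phiInv2 x y) z = [x, y, z] := by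
  cases x <;> cases y <;> cases z <;>
    simp_all [Perp, isHoriz, isVert, phiInv2, varphi, isNumeral]

theorem StrictPinWord.phi_eq {a b : Letter} {rest : List Letter}
    (h : StrictPinWord (a :: b :: rest)) :
    ∃ x y, phi (a :: b :: rest) = x :: y :: b :: rest ∧ Perp x y ∧ Perp y b := by
  obtain ⟨ha, hb, -⟩ := strictPinWord_cons_cons_iff.1 h
  obtain ⟨x, y, hxy, hperp⟩ := varphi_eq_of_isNumeral ha hb
  exact ⟨x, y, by rw [phi_cons_cons, hxy]; rfl, hperp⟩

theorem StrictPinWord.inM_phi {w : List Letter} (h : StrictPinWord w) : InM (phi w) := by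
  obtain ⟨a, b, rest, rfl⟩ := h.exists_eq_cons_cons
  obtain ⟨x, y, hphi, hxy, hyb⟩ := h.phi_eq
  obtain ⟨-, -, hrest, halt⟩ := strictPinWord_cons_cons_iff.1 h
  rw [hphi]
  exact inM_cons_cons_cons_iff.2 ⟨hxy, hyb, hrest, halt⟩

theorem StrictPinWord.length_phi {w : List Letter} (h : StrictPinWord w) :
    (phi w).length = w.length + 1 := by
  obtain ⟨a, b, rest, rfl⟩ := h.exists_eq_cons_cons
  obtain ⟨x, y, hphi, -⟩ := h.phi_eq
  simp [hphi]

theorem phi_injOn_strictPinWord : Set.InjOn phi {w | StrictPinWord w} := by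
  intro w hw w' hw' h
  obtain ⟨a, b, rest, rfl⟩ := StrictPinWord.exists_eq_cons_cons hw
  obtain ⟨a', b', rest', rfl⟩ := StrictPinWord.exists_eq_cons_cons hw'
  obtain ⟨x, y, hphi, -⟩ := StrictPinWord.phi_eq hw
  obtain ⟨x', y', hphi', -⟩ := StrictPinWord.phi_eq hw'
  obtain ⟨-, -, rfl, rfl⟩ : x = x' ∧ y = y' ∧ b = b' ∧ rest = rest' := by
    simpa [hphi, hphi'] using h
  have : varphi a b = varphi a' b := by
    simpa only [phi_cons_cons, List.append_cancel_right_eq] using h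
  rw [varphi_left_injOn b (strictPinWord_cons_cons_iff.1 hw).1
    (strictPinWord_cons_cons_iff.1 hw').1 this]

theorem InM.exists_phi_eq {v : List Letter} (h : InM v) :
    ∃ w, StrictPinWord w ∧ phi w = v := by
  obtain ⟨x, y, z, rest, rfl⟩ := h.exists_eq_cons_cons_cons
  obtain ⟨hxy, hyz, hrest, halt⟩ := inM_cons_cons_cons_iff.1 h
  obtain ⟨hnum, hphi⟩ := varphi_phiInv2 hxy hyz
  refine ⟨phiInv2 x y :: z :: rest, ?_, by rw [phi_cons_cons, hphi]; rfl⟩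
  exact strictPinWord_cons_cons_iff.2 ⟨hnum, hyz.isDir_right, hrest, halt⟩

theorem phi_bijOn_general (n : ℕ) :
    Set.BijOn phi {w : List Letter | StrictPinWord w ∧ w.length = n}
      {w : List Letter | InM w ∧ w.length = n + 1} := by
  refine ⟨?_, fun w hw w' hw' => phi_injOn_strictPinWord hw.1 hw'.1, ?_⟩
  · rintro w ⟨hw, rfl⟩
    exact ⟨hw.inM_phi, hw.length_phi⟩
  · rintro v ⟨hv, hlen⟩
    obtain ⟨w, hw, rfl⟩ := hv.exists_phi_eq
    exact ⟨w, ⟨hw, by simpa [hw.length_phi] using hlen⟩, rfl⟩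

/-- φ is a bijection from strict pin words of length n (n ≥ 2)
onto the words of M of length n+1. -/
theorem phi_bijOn (n : ℕ) (hn : 2 ≤ n) :
    Set.BijOn phi {w : List Letter | StrictPinWord w ∧ w.length = n}
      {w : List Letter | InM w ∧ w.length = n + 1} :=
  phi_bijOn_general n

end PinWords
end

section
/- Any pin representation of a simple pin-permutation is proper, i.e., for every i ≥ 3 the pin p_i separates p_{i-1} from {p₁,…,p_{i-2}}. -/
/-!
If a pin `p i` with `i ≥ 2` (0-indexed) is independent of its predecessors, then every later pin
lies in a corner of the bounding box of `p 0, …, p (i-1)`: an independent pin by definition, and a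
separating pin because it lies outside the box of all earlier pins while straddling them in one
coordinate. So these `i ≥ 2` points form a block of size less than `n`, contradicting simplicity.
-/


namespace PinWords

open Letter

/-- `c` lies in one of the four open corner regions around the bounding box of `S`. -/
def InCorner (S : Set Pt) (c : Pt) : Prop :=
  ((∀ a ∈ S, a.1 < c.1) ∨ ∀ a ∈ S, c.1 < a.1) ∧ ((∀ a ∈ S, a.2 < c.2) ∨ ∀ a ∈ S, c.2 < a.2)

lemma InCorner.mono {S T : Set Pt} {c : Pt} (h : InCorner S c) (hTS : T ⊆ S) : InCorner T c :=
  ⟨h.1.imp (fun h a ha => h a (hTS ha)) (fun h a ha => h a (hTS ha)),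
    h.2.imp (fun h a ha => h a (hTS ha)) (fun h a ha => h a (hTS ha))⟩

lemma forall_lt_or_forall_gt_of_not_straddle {α β : Type*} [LinearOrder β] {S : Set α}
    {f : α → β} {t : β} (h : ¬((∃ a ∈ S, f a ≤ t) ∧ ∃ a ∈ S, t ≤ f a)) :
    (∀ a ∈ S, f a < t) ∨ ∀ a ∈ S, t < f a := by
  by_contra hc
  push Not at hc
  exact h hc.symm

lemma forall_lt_or_forall_gt_of_not_strict_straddle {α β : Type*} [LinearOrder β] {S : Set α}
    {f : α → β} {t : β} (hne : ∀ a ∈ S, f a ≠ t)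
    (h : ¬((∃ a ∈ S, f a < t) ∧ ∃ a ∈ S, t < f a)) :
    (∀ a ∈ S, f a < t) ∨ ∀ a ∈ S, t < f a :=
  forall_lt_or_forall_gt_of_not_straddle fun ⟨⟨a, ha, hat⟩, b, hb, htb⟩ =>
    h ⟨⟨a, ha, hat.lt_of_ne (hne a ha)⟩, b, hb, htb.lt_of_ne (hne b hb).symm⟩

lemma Independent.inCorner {c : Pt} {S : Set Pt} (hind : Independent c S)
    (hne : ∀ a ∈ S, a.1 ≠ c.1 ∧ a.2 ≠ c.2) : InCorner S c :=
  ⟨forall_lt_or_forall_gt_of_not_strict_straddle (fun a ha => (hne a ha).1) hind.1,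
    forall_lt_or_forall_gt_of_not_strict_straddle (fun a ha => (hne a ha).2) hind.2⟩

section Separation

variable {c : Pt} {P Q S : Set Pt}

lemma SepVert.inCorner (hsep : SepVert c P Q) (hbox : ¬ InBox S c) (hPS : P ⊆ S) (hQS : Q ⊆ S)
    (hP : P.Nonempty) (hQ : Q.Nonempty) : InCorner Q c := by
  obtain ⟨a, ha⟩ := hP
  obtain ⟨b, hb⟩ := hQ
  have hstraddle : (∃ x ∈ S, x.1 ≤ c.1) ∧ ∃ x ∈ S, c.1 ≤ x.1 := by
    rcases hsep with ⟨hPc, hcQ⟩ | ⟨hcP, hQc⟩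
    · exact ⟨⟨a, hPS ha, (hPc a ha).le⟩, b, hQS hb, (hcQ b hb).le⟩
    · exact ⟨⟨b, hQS hb, (hQc b hb).le⟩, a, hPS ha, (hcP a ha).le⟩
  have hy : (∀ x ∈ S, x.2 < c.2) ∨ ∀ x ∈ S, c.2 < x.2 :=
    forall_lt_or_forall_gt_of_not_straddle fun h => hbox ⟨hstraddle.1, hstraddle.2, h⟩
  refine ⟨hsep.symm.imp (fun h => h.2) (fun h => h.2), ?_⟩
  exact hy.imp (fun h x hx => h x (hQS hx)) (fun h x hx => h x (hQS hx))

lemma SepHoriz.inCorner (hsep : SepHoriz c P Q) (hbox : ¬ InBox S c) (hPS : P ⊆ S)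
    (hQS : Q ⊆ S) (hP : P.Nonempty) (hQ : Q.Nonempty) : InCorner Q c := by
  obtain ⟨a, ha⟩ := hP
  obtain ⟨b, hb⟩ := hQ
  have hstraddle : (∃ x ∈ S, x.2 ≤ c.2) ∧ ∃ x ∈ S, c.2 ≤ x.2 := by
    rcases hsep with ⟨hPc, hcQ⟩ | ⟨hcP, hQc⟩
    · exact ⟨⟨a, hPS ha, (hPc a ha).le⟩, b, hQS hb, (hcQ b hb).le⟩
    · exact ⟨⟨b, hQS hb, (hQc b hb).le⟩, a, hPS ha, (hcP a ha).le⟩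
  have hx : (∀ x ∈ S, x.1 < c.1) ∨ ∀ x ∈ S, c.1 < x.1 :=
    forall_lt_or_forall_gt_of_not_straddle fun h => hbox ⟨h.1, h.2, hstraddle⟩
  refine ⟨?_, hsep.symm.imp (fun h => h.2) (fun h => h.2)⟩
  exact hx.imp (fun h x hx => h x (hQS hx)) (fun h x hx => h x (hQS hx))

lemma Separates.inCorner (hsep : Separates c P Q) (hbox : ¬ InBox S c) (hPS : P ⊆ S)
    (hQS : Q ⊆ S) (hP : P.Nonempty) (hQ : Q.Nonempty) : InCorner Q c :=
  hsep.elim (·.inCorner hbox hPS hQS hP hQ) (·.inCorner hbox hPS hQS hP hQ)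

end Separation

section PinSequence

variable {n : ℕ} {p : Fin n → Pt}

lemma prevSet_mono {i j : ℕ} (h : i ≤ j) : prevSet p i ⊆ prevSet p j := by
  rintro _ ⟨l, hl, rfl⟩
  exact ⟨l, hl.trans_le h, rfl⟩

lemma prevSet_eq_image (i : Fin n) : prevSet p i = p '' Set.Iio i := by
  ext x
  simp only [prevSet, Set.mem_ofPred_eq, Set.mem_image, Set.mem_Iio, Fin.lt_def, eq_comm]

lemma IsPinSeq.inCorner_of_independent (hpin : IsPinSeq p) {i : Fin n}
    (hind : Independent (p i) (prevSet p i)) {k : Fin n} (hik : i ≤ k) :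
    InCorner (prevSet p i) (p k) := by
  have hne : ∀ a ∈ prevSet p k, a.1 ≠ (p k).1 ∧ a.2 ≠ (p k).2 := by
    rintro _ ⟨j, hj, rfl⟩
    exact hpin.1 j k (ne_of_lt hj)
  rcases hik.eq_or_lt with rfl | hik
  · exact hind.inCorner hne
  rcases (prevSet p i).eq_empty_or_nonempty with hempty | hnonempty
  · simp [InCorner, hempty]
  have hk : 1 ≤ k.val := by omega
  obtain ⟨hbox, hsep | hind'⟩ := hpin.2 k hk
  · have hPS : {x | ∃ j : Fin n, j.val + 1 = k.val ∧ x = p j} ⊆ prevSet p k := by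
      rintro _ ⟨j, hj, rfl⟩
      exact ⟨j, by omega, rfl⟩
    have hP : {x | ∃ j : Fin n, j.val + 1 = k.val ∧ x = p j}.Nonempty :=
      ⟨_, ⟨k.val - 1, by omega⟩, Nat.sub_add_cancel hk, rfl⟩
    have hiQ : prevSet p i ⊆ prevSet p (k.val - 1) := prevSet_mono (by omega)
    exact (hsep.inCorner hbox hPS (prevSet_mono (by omega)) hP (hnonempty.mono hiQ)).mono hiQ
  · exact (hind'.inCorner hne).mono (prevSet_mono hik.le)

end PinSequence

lemma isIntervalSet_image_of_one_sided {k m : ℕ} {β : Type*} [LinearOrder β] {g : Fin k ≃ Fin m}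
    {f : Fin k → β} (hf : ∀ i j, f i < f j ↔ g i < g j) {A : Set (Fin k)}
    (hside : ∀ j ∉ A, (∀ i ∈ A, f i < f j) ∨ ∀ i ∈ A, f j < f i) : IsIntervalSet (g '' A) := by
  rintro _ ⟨u, hu, rfl⟩ _ ⟨v, hv, rfl⟩ c huc hcv
  obtain ⟨j, rfl⟩ := g.surjective c
  by_contra hj
  have hjA : j ∉ A := fun h => hj ⟨j, h, rfl⟩
  have hu_lt : f u < f j := (hf u j).2 (huc.lt_of_ne fun h => hjA (g.injective h ▸ hu))
  have hlt_v : f j < f v := (hf j v).2 (hcv.lt_of_ne fun h => hjA (g.injective h ▸ hv))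
  rcases hside j hjA with h | h
  · exact (h v hv).asymm hlt_v
  · exact (h u hu).asymm hu_lt

lemma isIntervalSet_image_of_inCorner {k m : ℕ} {p : Fin k → Pt} {σ : Equiv.Perm (Fin m)}
    {e : Fin k ≃ Fin m}
    (he : ∀ i j, ((p i).1 < (p j).1 ↔ e i < e j) ∧ ((p i).2 < (p j).2 ↔ σ (e i) < σ (e j)))
    {A : Set (Fin k)} (hA : ∀ j ∉ A, InCorner (p '' A) (p j)) :
    IsIntervalSet (e '' A) ∧ IsIntervalSet (σ '' (e '' A)) := by
  simp only [InCorner, Set.forall_mem_image] at hA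
  refine ⟨isIntervalSet_image_of_one_sided (fun i j => (he i j).1) fun j hj => (hA j hj).1, ?_⟩
  rw [Set.image_image]
  exact isIntervalSet_image_of_one_sided (g := e.trans σ) (fun i j => (he i j).2)
    fun j hj => (hA j hj).2

/-- any pin representation of a simple pin-permutation is proper. -/
theorem pinSeq_of_simple_isProper {n : ℕ} (σ : Equiv.Perm (Fin n)) (p : Fin n → Pt)
    (hpin : IsPinSeq p) (hrep : RepresentsPerm p σ) (hsimple : IsSimplePerm σ) :
    IsProperPinSeq p := by
  refine ⟨hpin, fun i hi => (hpin.2 i (by omega)).2.resolve_right fun hind => ?_⟩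
  obtain ⟨e, he⟩ := hrep
  have hcorner : ∀ k ∉ Set.Iio i, InCorner (p '' Set.Iio i) (p k) := fun k hk =>
    prevSet_eq_image i ▸ hpin.inCorner_of_independent hind (not_lt.mp hk)
  obtain ⟨hpos, hval⟩ := isIntervalSet_image_of_inCorner he hcorner
  rcases hsimple _ hpos hval with hcard | huniv
  · have hncard : (e '' Set.Iio i).ncard = i := by
      rw [Set.ncard_image_of_injective _ e.injective, ← Finset.coe_Iio, Set.ncard_coe_finset,
        Fin.card_Iio]
    omega
  · have hi_mem : i ∈ Set.Iio i := e.injective.mem_set_image.1 (huniv ▸ Set.mem_univ (e i))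
    exact lt_irrefl i hi_mem

end PinWords
end

section
/- If π is a simple permutation, w is a strict pin word corresponding to a permutation σ, u is a quasi-strict pin word corresponding to π, and φ(u₂…u_{|u|}) is a factor of φ(w) beginning at position p ≥ 3, then π is a pattern of σ. -/
namespace PinWords

open Letter

/-!
Write `u = n₀ n₁ v`, so that `φ(u₂…u_|u|) = x y v` where the directions `x y` name the quadrant
`n₁`. The factor puts `x y v` into `w` behind at least one letter, so the pins of `σ` contain a pin
`q_j` followed by pins encoded by `x`, `y` and the letters of `v`. Send the first pin of `u` to
`q_j` and its `i`-th pin, `i ≥ 2`, to `q_{j+i}`, skipping the pin of `x`. After `x y` the pin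
`q_{j+2}` lies in quadrant `n₁` of `q_j`, exactly as the second pin of `u` lies relative to the
first.
From then on both words read the same direction letter, and a direction letter places the new pin
relative to every older pin as a function of the letter and of the relative position of the last
two pins only; so by induction the two point sets are order isomorphic.
-/

theorem isNumeral.not_isDir {c : Letter} (h : isNumeral c) : ¬ isDir c := by
  cases c <;> simp_all [isNumeral, isDir]

theorem phi_numeral_cons {n d : Letter} (hn : isNumeral n) (hd : isDir d) (v : List Letter) :
    ∃ x y, phi (n :: d :: v) = x :: y :: d :: v ∧ Alternating [x, y] ∧ phiInv2 x y = n := by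
  cases n <;> cases d <;> first
    | exact hn.elim
    | exact hd.elim
    | exact ⟨_, _, rfl, by simp [Alternating, isHoriz, isVert], rfl⟩

theorem StrictPinWord.exists_eq_cons_append {w a z b : List Letter} (hw : StrictPinWord w)
    (h : phi w = a ++ z ++ b) (ha : 2 ≤ a.length) : ∃ w₀ pre, w = w₀ :: (pre ++ z ++ b) := by
  obtain _ | ⟨w₀, _ | ⟨w₁, wr⟩⟩ := w
  · exact hw.elim
  · exact absurd rfl hw.2.1
  obtain ⟨hw₀, -, hdir, -⟩ := hw
  obtain ⟨x, y, hφ, -⟩ := phi_numeral_cons hw₀ (hdir w₁ List.mem_cons_self) wr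
  obtain _ | ⟨a₀, _ | ⟨a₁, pre⟩⟩ := a
  · simp at ha
  · simp at ha
  rw [hφ] at h
  simp only [List.cons_append, List.cons.injEq] at h
  exact ⟨w₀, pre, by rw [h.2.2]⟩

theorem compare_eq_compare_of_lt_of_lt {α : Type*} [LinearOrder α] {a b a' b' : α}
    (h : a < b) (h' : a' < b') : compare a b = compare a' b' := by
  rw [compare_lt_iff_lt.2 h, compare_lt_iff_lt.2 h']

theorem compare_eq_compare_of_gt_of_gt {α : Type*} [LinearOrder α] {a b a' b' : α}
    (h : b < a) (h' : b' < a') : compare a b = compare a' b' := by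
  rw [compare_gt_iff_gt.2 h, compare_gt_iff_gt.2 h']

def SameRelPos (a b a' b' : Pt) : Prop :=
  compare a.1 b.1 = compare a'.1 b'.1 ∧ compare a.2 b.2 = compare a'.2 b'.2

namespace SameRelPos

variable {a b a' b' : Pt}

theorem refl (a a' : Pt) : SameRelPos a a a' a' := by
  simp [SameRelPos]

theorem symm (h : SameRelPos a b a' b') : SameRelPos b a b' a' := by
  constructor
  · rw [Std.OrientedCmp.eq_swap (cmp := compare) (a := b.1), h.1, ← Std.OrientedCmp.eq_swap]
  · rw [Std.OrientedCmp.eq_swap (cmp := compare) (a := b.2), h.2, ← Std.OrientedCmp.eq_swap]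

theorem lt_fst_iff (h : SameRelPos a b a' b') : a.1 < b.1 ↔ a'.1 < b'.1 := by
  rw [← compare_lt_iff_lt, h.1, compare_lt_iff_lt]

theorem lt_snd_iff (h : SameRelPos a b a' b') : a.2 < b.2 ↔ a'.2 < b'.2 := by
  rw [← compare_lt_iff_lt, h.2, compare_lt_iff_lt]

end SameRelPos

section Separation

variable {X A B o : Pt} {T O : Set Pt}

theorem SepVert.compare_older (h : SepVert X T O) (hA : A ∈ T) (hB : B ∈ O) (ho : o ∈ O) :
    compare o.1 X.1 = compare B.1 A.1 := by
  rcases h with ⟨hT, hO⟩ | ⟨hT, hO⟩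
  · exact compare_eq_compare_of_gt_of_gt (hO o ho) ((hT A hA).trans (hO B hB))
  · exact compare_eq_compare_of_lt_of_lt (hO o ho) ((hO B hB).trans (hT A hA))

theorem SepVert.compare_pin (h : SepVert X T O) (hA : A ∈ T) (hB : B ∈ O) :
    compare A.1 X.1 = compare A.1 B.1 := by
  rcases h with ⟨hT, hO⟩ | ⟨hT, hO⟩
  · exact compare_eq_compare_of_lt_of_lt (hT A hA) ((hT A hA).trans (hO B hB))
  · exact compare_eq_compare_of_gt_of_gt (hT A hA) ((hO B hB).trans (hT A hA))

theorem SepHoriz.compare_older (h : SepHoriz X T O) (hA : A ∈ T) (hB : B ∈ O) (ho : o ∈ O) :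
    compare o.2 X.2 = compare B.2 A.2 := by
  rcases h with ⟨hT, hO⟩ | ⟨hT, hO⟩
  · exact compare_eq_compare_of_gt_of_gt (hO o ho) ((hT A hA).trans (hO B hB))
  · exact compare_eq_compare_of_lt_of_lt (hO o ho) ((hO B hB).trans (hT A hA))

theorem SepHoriz.compare_pin (h : SepHoriz X T O) (hA : A ∈ T) (hB : B ∈ O) :
    compare A.2 X.2 = compare A.2 B.2 := by
  rcases h with ⟨hT, hO⟩ | ⟨hT, hO⟩
  · exact compare_eq_compare_of_lt_of_lt (hT A hA) ((hT A hA).trans (hO B hB))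
  · exact compare_eq_compare_of_gt_of_gt (hT A hA) ((hO B hB).trans (hT A hA))

end Separation

/-- `Encodes` for a point sequence indexed by all of `ℕ`, `P 0` being the origin. -/
def EncodesSeq (w : List Letter) (P : ℕ → Pt) : Prop :=
  ∀ k c, w[k]? = some c →
    LetterEncodes c (P (k + 1)) (P '' Set.Iio (k + 1)) {P k} (P '' Set.Iio k)

section Clamp

variable {n : ℕ} (p : Fin (n + 1) → Pt)

theorem image_clamp_Iio_eq_prevSet (N : ℕ) :
    (fun s => p (Fin.clamp s n)) '' Set.Iio N = prevSet p N := by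
  ext a
  constructor
  · rintro ⟨s, hs, rfl⟩
    exact ⟨Fin.clamp s n, by simp only [Fin.clamp, Set.mem_Iio] at hs ⊢; omega, rfl⟩
  · rintro ⟨i, hi, rfl⟩
    exact ⟨i, hi, congrArg p (Fin.ext (by simp [Fin.clamp]; omega))⟩

theorem singleton_clamp_eq {k : ℕ} (hk : k ≤ n) :
    {p (Fin.clamp k n)} = {a | ∃ i : Fin (n + 1), i.val = k ∧ a = p i} := by
  ext a
  simp only [Set.mem_singleton_iff, Set.mem_ofPred_eq]
  constructor
  · rintro rfl
    exact ⟨Fin.clamp k n, by simp [Fin.clamp, hk], rfl⟩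
  · rintro ⟨i, rfl, rfl⟩
    exact congrArg p (Fin.ext (by simp [Fin.clamp]; omega))

end Clamp

theorem Fin.clamp_add_one_eq_succ {n : ℕ} (i : Fin n) : Fin.clamp (i + 1) n = i.succ :=
  Fin.ext (Nat.min_eq_left i.isLt)

theorem Encodes.encodesSeq {w : List Letter} {p : Fin (w.length + 1) → Pt} (h : Encodes w p) :
    EncodesSeq w (fun s => p (Fin.clamp s w.length)) := by
  intro k c hc
  obtain ⟨hk, rfl⟩ := List.getElem?_eq_some_iff.1 hc
  rw [image_clamp_Iio_eq_prevSet, image_clamp_Iio_eq_prevSet, singleton_clamp_eq p hk.le]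
  convert h.2 ⟨k, hk⟩ using 2
  · rfl
  · exact Fin.clamp_add_one_eq_succ ⟨k, hk⟩

theorem WordRepresents.exists_encodesSeq {w : List Letter} {m : ℕ} {σ : Equiv.Perm (Fin m)}
    (h : WordRepresents w σ) :
    ∃ P : ℕ → Pt, EncodesSeq w P ∧ RepresentsPerm (fun i : Fin w.length => P (i + 1)) σ := by
  obtain ⟨p, hp, hpσ⟩ := h
  refine ⟨_, hp.encodesSeq, ?_⟩
  convert hpσ using 3 with i
  exact Fin.clamp_add_one_eq_succ i

theorem EncodesSeq.sameRelPos_of_isDir {u w : List Letter} {P Q : ℕ → Pt}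
    (hP : EncodesSeq u P) (hQ : EncodesSeq w Q) {c : Letter} (hc : isDir c) {k l b b' : ℕ}
    (hu : u[k]? = some c) (hw : w[l]? = some c) (hb : b < k) (hb' : b' < l)
    (hlast : SameRelPos (P b) (P k) (Q b') (Q l)) :
    SameRelPos (P k) (P (k + 1)) (Q l) (Q (l + 1)) ∧
      ∀ s < k, ∀ s' < l, SameRelPos (P s) (P (k + 1)) (Q s') (Q (l + 1)) := by
  have h := hP k c hu
  have h' := hQ l c hw
  have hA := Set.mem_singleton (P k)
  have hA' := Set.mem_singleton (Q l)
  have hB : P b ∈ P '' Set.Iio k := Set.mem_image_of_mem P hb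
  have hB' : Q b' ∈ Q '' Set.Iio l := Set.mem_image_of_mem Q hb'
  have hAS : P k ∈ P '' Set.Iio (k + 1) := Set.mem_image_of_mem P k.lt_succ_self
  have hAS' : Q l ∈ Q '' Set.Iio (l + 1) := Set.mem_image_of_mem Q l.lt_succ_self
  refine ⟨?_, fun s hs s' hs' => ?_⟩
  · cases c with
    | U => exact ⟨by rw [h.2.compare_pin hA hB, h'.2.compare_pin hA' hB', hlast.symm.1],
        compare_eq_compare_of_lt_of_lt (h.1 _ hAS) (h'.1 _ hAS')⟩
    | D => exact ⟨by rw [h.2.compare_pin hA hB, h'.2.compare_pin hA' hB', hlast.symm.1],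
        compare_eq_compare_of_gt_of_gt (h.1 _ hAS) (h'.1 _ hAS')⟩
    | L => exact ⟨compare_eq_compare_of_gt_of_gt (h.1 _ hAS) (h'.1 _ hAS'),
        by rw [h.2.compare_pin hA hB, h'.2.compare_pin hA' hB', hlast.symm.2]⟩
    | R => exact ⟨compare_eq_compare_of_lt_of_lt (h.1 _ hAS) (h'.1 _ hAS'),
        by rw [h.2.compare_pin hA hB, h'.2.compare_pin hA' hB', hlast.symm.2]⟩
    | _ => exact hc.elim
  · have ho : P s ∈ P '' Set.Iio k := Set.mem_image_of_mem P hs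
    have ho' : Q s' ∈ Q '' Set.Iio l := Set.mem_image_of_mem Q hs'
    have hoS : P s ∈ P '' Set.Iio (k + 1) := Set.mem_image_of_mem P (hs.trans k.lt_succ_self)
    have hoS' : Q s' ∈ Q '' Set.Iio (l + 1) := Set.mem_image_of_mem Q (hs'.trans l.lt_succ_self)
    cases c with
    | U => exact ⟨by rw [h.2.compare_older hA hB ho, h'.2.compare_older hA' hB' ho', hlast.1],
        compare_eq_compare_of_lt_of_lt (h.1 _ hoS) (h'.1 _ hoS')⟩
    | D => exact ⟨by rw [h.2.compare_older hA hB ho, h'.2.compare_older hA' hB' ho', hlast.1],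
        compare_eq_compare_of_gt_of_gt (h.1 _ hoS) (h'.1 _ hoS')⟩
    | L => exact ⟨compare_eq_compare_of_gt_of_gt (h.1 _ hoS) (h'.1 _ hoS'),
        by rw [h.2.compare_older hA hB ho, h'.2.compare_older hA' hB' ho', hlast.2]⟩
    | R => exact ⟨compare_eq_compare_of_lt_of_lt (h.1 _ hoS) (h'.1 _ hoS'),
        by rw [h.2.compare_older hA hB ho, h'.2.compare_older hA' hB' ho', hlast.2]⟩
    | _ => exact hc.elim

theorem LetterEncodes.inQuadrant {c : Letter} (hc : isNumeral c) {X : Pt} {S T O : Set Pt}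
    (h : LetterEncodes c X S T O) : InQuadrant c X S := by
  cases c <;> first | exact hc.elim | exact h.2

theorem InQuadrant.sameRelPos {c : Letter} {X X' o o' : Pt} {S S' : Set Pt}
    (h : InQuadrant c X S) (h' : InQuadrant c X' S') (ho : o ∈ S) (ho' : o' ∈ S') :
    SameRelPos o X o' X' := by
  cases c
  case N1 => exact ⟨compare_eq_compare_of_lt_of_lt (h o ho).1 (h' o' ho').1,
    compare_eq_compare_of_lt_of_lt (h o ho).2 (h' o' ho').2⟩
  case N2 => exact ⟨compare_eq_compare_of_gt_of_gt (h o ho).1 (h' o' ho').1,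
    compare_eq_compare_of_lt_of_lt (h o ho).2 (h' o' ho').2⟩
  case N3 => exact ⟨compare_eq_compare_of_gt_of_gt (h o ho).1 (h' o' ho').1,
    compare_eq_compare_of_gt_of_gt (h o ho).2 (h' o' ho').2⟩
  case N4 => exact ⟨compare_eq_compare_of_lt_of_lt (h o ho).1 (h' o' ho').1,
    compare_eq_compare_of_gt_of_gt (h o ho).2 (h' o' ho').2⟩
  all_goals exact h.elim

/- `x` fixes one coordinate of `X₁` against `o`; since `X₂` separates `X₁` from `o` along that
coordinate, `o` keeps that side of `X₂`, and `y` fixes the other coordinate. -/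
theorem inQuadrant_phiInv2 {x y : Letter} (hxy : Alternating [x, y]) {X₁ X₂ o : Pt}
    {S₁ T₁ O₁ S₂ O₂ : Set Pt} (h₁ : LetterEncodes x X₁ S₁ T₁ O₁)
    (h₂ : LetterEncodes y X₂ S₂ {X₁} O₂) (ho₁ : o ∈ S₁) (ho₂ : o ∈ O₂) (ho₂' : o ∈ S₂) :
    InQuadrant (phiInv2 x y) X₂ {o} := by
  cases x <;> cases y <;> simp [Alternating, isHoriz, isVert] at hxy <;>
    simp only [LetterEncodes, SepVert, SepHoriz] at h₁ h₂ <;>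
    simp only [phiInv2, InQuadrant, Set.mem_singleton_iff, forall_eq] <;>
    have := h₁.1 o ho₁ <;> have := h₂.1 o ho₂' <;>
    rcases h₂.2 with ⟨hT, hO⟩ | ⟨hT, hO⟩ <;> have := hT X₁ rfl <;> have := hO o ho₂ <;> omega

/-- The index of the pin of `w` matched with pin `s + 1` of `u` when the factor `x y v` of `w`
starts at letter `j`: pin `j` precedes the factor, and the pin `j + 1` of `x` is skipped. -/
def pinIndex (j : ℕ) : ℕ → ℕ
  | 0 => j
  | s + 1 => j + s + 2

theorem le_pinIndex (j s : ℕ) : j ≤ pinIndex j s := by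
  cases s <;> simp only [pinIndex] <;> omega

theorem pinIndex_le (j s : ℕ) : pinIndex j s ≤ j + s + 1 := by
  cases s <;> simp only [pinIndex] <;> omega

theorem EncodesSeq.sameRelPos_pinIndex {n₀ n₁ x y : Letter} {v pre post : List Letter}
    {P Q : ℕ → Pt} (hP : EncodesSeq (n₀ :: n₁ :: v) P)
    (hQ : EncodesSeq (pre ++ x :: y :: v ++ post) Q) (hn₁ : isNumeral n₁)
    (hxy : Alternating [x, y]) (hquad : phiInv2 x y = n₁) (hv : ∀ c ∈ v, isDir c) :
    ∀ t < v.length + 2, ∀ s < t,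
      SameRelPos (P (s + 1)) (P (t + 1)) (Q (pinIndex pre.length s)) (Q (pinIndex pre.length t))
  | 1, _, 0, _ => by
    have hX₁ := hQ pre.length x (by simp)
    have hX₂ := hQ (pre.length + 1) y (by simp)
    have hQuad := inQuadrant_phiInv2 hxy hX₁ hX₂ (Set.mem_image_of_mem Q pre.length.lt_succ_self)
      (Set.mem_image_of_mem Q pre.length.lt_succ_self)
      (Set.mem_image_of_mem Q (pre.length.lt_succ_self.trans (pre.length + 1).lt_succ_self))
    rw [hquad] at hQuad
    exact ((hP 1 n₁ rfl).inQuadrant hn₁).sameRelPos hQuad (Set.mem_image_of_mem P (by simp)) rfl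
  | t + 2, ht, s, hs => by
    have htv : t < v.length := by omega
    have hu : (n₀ :: n₁ :: v)[t + 2]? = some v[t] := by simp
    have hw : (pre ++ x :: y :: v ++ post)[pre.length + t + 2]? = some v[t] := by
      rw [List.append_assoc, List.getElem?_append_right (by omega),
        show pre.length + t + 2 - pre.length = t + 2 by omega]
      simp [List.getElem?_append_left htv]
    have hlast := sameRelPos_pinIndex hP hQ hn₁ hxy hquad hv (t + 1) (by omega) t t.lt_succ_self
    obtain ⟨hpin, holder⟩ := hP.sameRelPos_of_isDir hQ (hv _ (List.getElem_mem htv)) hu hw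
      (by omega) (by have := pinIndex_le pre.length t; omega) hlast
    rcases Nat.lt_succ_iff_lt_or_eq.1 hs with hs | rfl
    · exact holder (s + 1) (by omega) (pinIndex pre.length s)
        (by have := pinIndex_le pre.length s; omega)
    · exact hpin

theorem RepresentsPerm.isPattern {n n' k m : ℕ} {p : Fin n → Pt} {q : Fin n' → Pt}
    {π : Equiv.Perm (Fin k)} {σ : Equiv.Perm (Fin m)} (hp : RepresentsPerm p π)
    (hq : RepresentsPerm q σ) (f : Fin n → Fin n')
    (hf : ∀ s t, SameRelPos (p s) (p t) (q (f s)) (q (f t))) : IsPattern π σ := by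
  obtain ⟨e, he⟩ := hp
  obtain ⟨e', he'⟩ := hq
  refine ⟨fun i => e' (f (e.symm i)), fun i i' hii' => ?_, fun i i' => ?_⟩
  · have := (he (e.symm i) (e.symm i')).1
    simp only [Equiv.apply_symm_apply] at this
    exact (he' _ _).1.1 ((hf _ _).lt_fst_iff.1 (this.2 hii'))
  · have := (he (e.symm i) (e.symm i')).2
    simp only [Equiv.apply_symm_apply] at this
    exact this.symm.trans ((hf _ _).lt_snd_iff.trans (he' _ _).2)

theorem isPattern_of_sameRelPos {n n' k m : ℕ} {π : Equiv.Perm (Fin k)}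
    {σ : Equiv.Perm (Fin m)} {P Q : ℕ → Pt} {g : ℕ → ℕ}
    (hP : RepresentsPerm (fun i : Fin n => P (i + 1)) π)
    (hQ : RepresentsPerm (fun i : Fin n' => Q (i + 1)) σ) (hg : ∀ s < n, 1 ≤ g s ∧ g s ≤ n')
    (h : ∀ t < n, ∀ s < t, SameRelPos (P (s + 1)) (P (t + 1)) (Q (g s)) (Q (g t))) :
    IsPattern π σ := by
  refine hP.isPattern hQ (fun s => ⟨g s - 1, by have := hg s s.isLt; omega⟩) fun s t => ?_
  have hQg : ∀ s : Fin n, Q (g s - 1 + 1) = Q (g s) := fun s => by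
    rw [Nat.sub_add_cancel (hg s s.isLt).1]
  simp only [hQg]
  rcases lt_trichotomy s t with hst | rfl | hts
  · exact h t t.isLt s hst
  · exact SameRelPos.refl _ _
  · exact (h s s.isLt t hts).symm

theorem pattern_of_factor_general {k m : ℕ} (π : Equiv.Perm (Fin k)) (σ : Equiv.Perm (Fin m))
    (w u : List Letter)
    (hw : StrictPinWord w) (hwσ : WordRepresents w σ)
    (hu : QuasiStrictPinWord u) (huπ : WordRepresents u π)
    (h : ∃ a b : List Letter, phi w = a ++ phi u.tail ++ b ∧ 2 ≤ a.length) :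
    IsPattern π σ := by
  obtain ⟨a, b, hfac, ha⟩ := h
  obtain ⟨w₀, pre, rfl⟩ := hw.exists_eq_cons_append hfac ha
  rcases u with _ | ⟨n₀, _ | ⟨n₁, _ | ⟨d, v⟩⟩⟩
  · exact hu.elim
  · exact hu.elim
  · exact (hu.2.1.not_isDir (hw.2.2.1 n₁ (by simp [phi]))).elim
  obtain ⟨-, hn₁, hdir, -⟩ := hu
  obtain ⟨x, y, hφ, hxy, hquad⟩ := phi_numeral_cons hn₁ (hdir d List.mem_cons_self) v
  obtain ⟨P, hP, hPπ⟩ := huπ.exists_encodesSeq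
  obtain ⟨Q, hQ, hQσ⟩ := hwσ.exists_encodesSeq
  rw [List.tail_cons, hφ, ← List.cons_append, ← List.cons_append] at hQ hQσ
  refine isPattern_of_sameRelPos hPπ hQσ (g := pinIndex (w₀ :: pre).length) (fun s hs => ?_)
    (hP.sameRelPos_pinIndex hQ hn₁ hxy hquad hdir)
  simp only [List.length_cons, List.length_append] at hs ⊢
  have := pinIndex_le (pre.length + 1) s
  have := le_pinIndex (pre.length + 1) s
  omega

/-- if π is simple, w a strict pin word of σ, u a quasi-strict
pin word of π, and φ(u₂…u_|u|) is a factor of φ(w) beginning at position ≥ 3,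
then π is a pattern of σ. -/
theorem pattern_of_factor {k m : ℕ} (π : Equiv.Perm (Fin k)) (σ : Equiv.Perm (Fin m))
    (hsimple : IsSimplePerm π) (w u : List Letter)
    (hw : StrictPinWord w) (hwσ : WordRepresents w σ)
    (hu : QuasiStrictPinWord u) (huπ : WordRepresents u π)
    (h : ∃ a b : List Letter, phi w = a ++ phi u.tail ++ b ∧ 2 ≤ a.length) :
    IsPattern π σ :=
  pattern_of_factor_general π σ w u hw hwσ hu huπ h

end PinWords
end
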